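/- Let Q be a key polynomial, α(Q) := min{deg(f) : ν_Q(f) < ν(f)} (∞ if ν_Q = ν), and Ψ(Q) := {f monic : ν_Q(f) < ν(f) and deg(f) = α(Q)}. Then every Q' ∈ Ψ(Q) is a key polynomial, and ε(Q) < ε(Q'). -/

import Mathlib

open Polynomial
open scoped Classical
noncomputable section

/-- `ν` is (the restriction to nonzero polynomials of) a valuation on `K[x]`,
nontrivial on `K`, with `ν(x) ≥ 0`.  Values are taken in a linearly ordered
field `Γ` (playing the role of the divisible hull of the value group). -/
structure IsVal {K : Type*} [Field K] {Γ : Type*} [Field Γ] [LinearOrder Γ] [IsStrictOrderedRing Γ]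
    (ν : Polynomial K → Γ) : Prop where
  map_mul : ∀ f g : Polynomial K, f ≠ 0 → g ≠ 0 → ν (f * g) = ν f + ν g
  map_add : ∀ f g : Polynomial K, f ≠ 0 → g ≠ 0 → f + g ≠ 0 →
    min (ν f) (ν g) ≤ ν (f + g)
  nontrivial : ∃ a : K, a ≠ 0 ∧ ν (C a) ≠ 0
  nonneg_x : 0 ≤ ν X

/-- `ε(f) = max_{b ≥ 1, ∂_b f ≠ 0} (ν(f) - ν(∂_b f))/b`, where `∂_b` is the
`b`-th formal (Hasse) derivative.  (Terms with `∂_b f = 0` correspond to the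
value `-∞` and are omitted from the maximum.) -/
noncomputable def eps {K : Type*} [Field K] {Γ : Type*} [Field Γ] [LinearOrder Γ] [IsStrictOrderedRing Γ]
    (ν : Polynomial K → Γ) (f : Polynomial K) : Γ :=
  if h : ((Finset.Icc 1 f.natDegree).filter
      fun b => Polynomial.hasseDeriv b f ≠ 0).Nonempty then
    ((Finset.Icc 1 f.natDegree).filter
      fun b => Polynomial.hasseDeriv b f ≠ 0).sup' h
      fun b => (ν f - ν (Polynomial.hasseDeriv b f)) / (b : Γ)
  else 0

/-- A monic (nonconstant) polynomial `Q` is a key polynomial for `ν` if every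
`f ∈ K[x]` with `ε(f) ≥ ε(Q)` satisfies `deg f ≥ deg Q`. -/
def IsKeyPol {K : Type*} [Field K] {Γ : Type*} [Field Γ] [LinearOrder Γ] [IsStrictOrderedRing Γ]
    (ν : Polynomial K → Γ) (Q : Polynomial K) : Prop :=
  Q.Monic ∧ 1 ≤ Q.natDegree ∧
    ∀ f : Polynomial K, 1 ≤ f.natDegree → eps ν Q ≤ eps ν f →
      Q.natDegree ≤ f.natDegree

/-- The `i`-th coefficient `f_i` of the `q`-standard expansion
`f = Σ f_i q^i` (each `f_i = 0` or `deg f_i < deg q`), for `q` monic. -/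
noncomputable def qCoeff {K : Type*} [Field K] (q f : Polynomial K) (i : ℕ) :
    Polynomial K :=
  (f /ₘ q ^ i) %ₘ q

/-- The `q`-truncation `ν_q(f) = min_i ν(f_i q^i)` of `ν`, the minimum taken
over the nonzero coefficients of the `q`-standard expansion of `f`. -/
noncomputable def truncVal {K : Type*} [Field K] {Γ : Type*}
    [Field Γ] [LinearOrder Γ] [IsStrictOrderedRing Γ] (ν : Polynomial K → Γ) (q f : Polynomial K) : Γ :=
  if h : ((Finset.range (f.natDegree + 1)).filter
      fun i => qCoeff q f i ≠ 0).Nonempty then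
    ((Finset.range (f.natDegree + 1)).filter
      fun i => qCoeff q f i ≠ 0).inf' h
      fun i => ν (qCoeff q f i * q ^ i)
  else 0

/-- `I(Q) = {b : (ν(Q) - ν(∂_b Q))/b = ε(Q)}`. -/
def Iset {K : Type*} [Field K] {Γ : Type*} [Field Γ] [LinearOrder Γ] [IsStrictOrderedRing Γ]
    (ν : Polynomial K → Γ) (Q : Polynomial K) : Set ℕ :=
  {b | 1 ≤ b ∧ Polynomial.hasseDeriv b Q ≠ 0 ∧
    (ν Q - ν (Polynomial.hasseDeriv b Q)) / (b : Γ) = eps ν Q}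

/-- `S_Q(f) = {i : ν(f_i Q^i) = ν_Q(f)}` (over nonzero coefficients). -/
def Sset {K : Type*} [Field K] {Γ : Type*} [Field Γ] [LinearOrder Γ] [IsStrictOrderedRing Γ]
    (ν : Polynomial K → Γ) (q f : Polynomial K) : Set ℕ :=
  {i | qCoeff q f i ≠ 0 ∧ ν (qCoeff q f i * q ^ i) = truncVal ν q f}


variable {K : Type*} [Field K] {Γ : Type*} [Field Γ] [LinearOrder Γ] [IsStrictOrderedRing Γ]

/-- `Ψ(Q)`: the monic polynomials `f` with `ν_Q(f) < ν(f)` of minimal degree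
(`deg f = α(Q)`) among all polynomials whose value is not computed by `ν_Q`. -/
def Psi (ν : Polynomial K → Γ) (Q : Polynomial K) : Set (Polynomial K) :=
  {f | f.Monic ∧ truncVal ν Q f < ν f ∧
    ∀ g : Polynomial K, g ≠ 0 → truncVal ν Q g < ν g →
      f.natDegree ≤ g.natDegree}
/-!
Write `f = Σ fᵢ Qⁱ` in its `Q`-expansion and let `b` be the largest index with
`ν(∂_b Q) = ν(Q) - b ε(Q)`. Since `deg fᵢ < deg Q`, the key property gives `ε(fᵢ) < ε(Q)`, and the
Leibniz rule for Hasse derivatives then shows that `ν(∂_j(fᵢQⁱ)) ≥ ν(fᵢQⁱ) - j ε(Q)` for all `j`,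
with equality at `j = ib` and strict inequality for `j > ib`.

If `ν_Q(f) = ν(f)`, summing the inequalities gives `ε(f) ≤ ε(Q)`. If `ν_Q(f) < ν(f)`, let `i` be
the largest index with `ν(fᵢQⁱ) = ν_Q(f)`: then `∂_{ib}(fᵢQⁱ)` is the unique dominant term of
`∂_{ib} f`, so `ν(∂_{ib} f) = ν_Q(f) - ib ε(Q) < ν(f) - ib ε(Q)` and `ε(f) > ε(Q)`. Hence a
polynomial `f` with `ε(f) ≥ ε(Q') > ε(Q)` has `ν_Q(f) < ν(f)`, and the minimality of `deg Q'` gives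
`deg f ≥ deg Q'`.
-/

open Finset

namespace IsVal

variable {ν : K[X] → Γ}

theorem map_one (hν : IsVal ν) : ν 1 = 0 := by
  have := hν.map_mul 1 1 one_ne_zero one_ne_zero
  rw [mul_one] at this
  linarith

theorem map_neg (hν : IsVal ν) {f : K[X]} (hf : f ≠ 0) : ν (-f) = ν f := by
  have h1 : (-1 : K[X]) ≠ 0 := neg_ne_zero.mpr one_ne_zero
  have hsq := hν.map_mul (-1) (-1) h1 h1
  rw [neg_one_mul, neg_neg, hν.map_one] at hsq
  rw [← neg_one_mul, hν.map_mul _ _ h1 hf]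
  linarith

theorem map_sum_mem_of_isUpperSet (hν : IsVal ν) {ι : Type*} {S : Set Γ} (hS : IsUpperSet S)
    (s : Finset ι) {g : ι → K[X]} (hg : ∀ i ∈ s, g i ≠ 0 → ν (g i) ∈ S)
    (hsum : ∑ i ∈ s, g i ≠ 0) : ν (∑ i ∈ s, g i) ∈ S := by
  induction s using Finset.induction_on with
  | empty => simp at hsum
  | insert a s ha ih =>
    rw [sum_insert ha] at hsum ⊢
    have hg' : ∀ i ∈ s, g i ≠ 0 → ν (g i) ∈ S := fun i hi => hg i (mem_insert_of_mem hi)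
    by_cases hga : g a = 0
    · rw [hga, zero_add] at hsum ⊢
      exact ih hg' hsum
    by_cases hs : ∑ i ∈ s, g i = 0
    · rw [hs, add_zero]
      exact hg a (mem_insert_self a s) hga
    exact hS (hν.map_add _ _ hga hs hsum)
      (min_rec' (· ∈ S) (hg a (mem_insert_self a s) hga) (ih hg' hs))

theorem le_map_sum (hν : IsVal ν) {ι : Type*} (s : Finset ι) {g : ι → K[X]} {c : Γ}
    (hg : ∀ i ∈ s, g i ≠ 0 → c ≤ ν (g i)) (hsum : ∑ i ∈ s, g i ≠ 0) :
    c ≤ ν (∑ i ∈ s, g i) :=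
  hν.map_sum_mem_of_isUpperSet (isUpperSet_Ici c) s hg hsum

theorem lt_map_sum (hν : IsVal ν) {ι : Type*} (s : Finset ι) {g : ι → K[X]} {c : Γ}
    (hg : ∀ i ∈ s, g i ≠ 0 → c < ν (g i)) (hsum : ∑ i ∈ s, g i ≠ 0) :
    c < ν (∑ i ∈ s, g i) :=
  hν.map_sum_mem_of_isUpperSet (isUpperSet_Ioi c) s hg hsum

theorem map_add_of_lt (hν : IsVal ν) {f g : K[X]} (hf : f ≠ 0) (hg : g ≠ 0) (h : ν f < ν g) :
    f + g ≠ 0 ∧ ν (f + g) = ν f := by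
  have hfg : f + g ≠ 0 := by
    intro h0
    rw [add_eq_zero_iff_eq_neg.mp h0, hν.map_neg hg] at h
    exact h.false
  refine ⟨hfg, le_antisymm ?_ ?_⟩
  · have := hν.map_add (f + g) (-g) hfg (neg_ne_zero.mpr hg) (by simpa using hf)
    rw [add_neg_cancel_right, hν.map_neg hg] at this
    exact (min_le_iff.mp this).resolve_right h.not_ge
  · simpa [min_eq_left h.le] using hν.map_add f g hf hg hfg

theorem map_sum_of_forall_lt (hν : IsVal ν) {ι : Type*} (s : Finset ι) (g : ι → K[X]) {k : ι}
    (hk : k ∈ s) (hgk : g k ≠ 0) (h : ∀ i ∈ s, i ≠ k → g i ≠ 0 → ν (g k) < ν (g i)) :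
    ∑ i ∈ s, g i ≠ 0 ∧ ν (∑ i ∈ s, g i) = ν (g k) := by
  rw [← add_sum_erase s g hk]
  by_cases hrest : ∑ i ∈ s.erase k, g i = 0
  · simpa [hrest] using hgk
  exact hν.map_add_of_lt hgk hrest <| hν.lt_map_sum _
    (fun i hi => h i (mem_of_mem_erase hi) (ne_of_mem_erase hi)) hrest

end IsVal

theorem Polynomial.le_natDegree_of_hasseDeriv_ne_zero {R : Type*} [Semiring R] {f : R[X]}
    {j : ℕ} (h : hasseDeriv j f ≠ 0) : j ≤ f.natDegree :=
  not_lt.mp fun hlt => h (hasseDeriv_eq_zero_of_lt_natDegree f j hlt)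

section Eps

variable {ν : K[X] → Γ} {f : K[X]} {c : Γ} {j : ℕ}

theorem nonempty_filter_hasseDeriv_ne_zero (hf : 1 ≤ f.natDegree) :
    ((Icc 1 f.natDegree).filter fun b => hasseDeriv b f ≠ 0).Nonempty :=
  ⟨f.natDegree, mem_filter.mpr ⟨mem_Icc.mpr ⟨hf, le_rfl⟩, by
    simpa [hasseDeriv_natDegree_eq_C] using ne_zero_of_natDegree_gt hf⟩⟩

theorem sub_mul_eps_le (hj : hasseDeriv j f ≠ 0) : ν f - j * eps ν f ≤ ν (hasseDeriv j f) := by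
  rcases Nat.eq_zero_or_pos j with rfl | hj1
  · simp
  have hmem : j ∈ (Icc 1 f.natDegree).filter fun b => hasseDeriv b f ≠ 0 :=
    mem_filter.mpr ⟨mem_Icc.mpr ⟨hj1, le_natDegree_of_hasseDeriv_ne_zero hj⟩, hj⟩
  have hle : (ν f - ν (hasseDeriv j f)) / j ≤ eps ν f := by
    rw [eps, dif_pos ⟨j, hmem⟩]
    exact le_sup' (fun b => (ν f - ν (hasseDeriv b f)) / (b : Γ)) hmem
  rw [div_le_iff₀ (by exact_mod_cast hj1)] at hle
  linarith

theorem eps_le_of_forall (hf : 1 ≤ f.natDegree)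
    (h : ∀ j, hasseDeriv j f ≠ 0 → ν f - j * c ≤ ν (hasseDeriv j f)) : eps ν f ≤ c := by
  rw [eps, dif_pos (nonempty_filter_hasseDeriv_ne_zero hf)]
  refine sup'_le _ _ fun b hb => ?_
  obtain ⟨hb, hb0⟩ := mem_filter.mp hb
  rw [div_le_iff₀ (by exact_mod_cast (mem_Icc.mp hb).1)]
  linarith [h b hb0]

theorem lt_eps_of_lt (hj : hasseDeriv j f ≠ 0) (h : ν (hasseDeriv j f) < ν f - j * c) :
    c < eps ν f := by
  by_contra! hc
  have := mul_le_mul_of_nonneg_left hc (Nat.cast_nonneg (α := Γ) j)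
  linarith [sub_mul_eps_le (ν := ν) hj]

theorem IsKeyPol.eps_lt {Q : K[X]} (hQ : IsKeyPol ν Q) (hf : 1 ≤ f.natDegree)
    (hfQ : f.natDegree < Q.natDegree) : eps ν f < eps ν Q :=
  lt_of_not_ge fun h => (hQ.2.2 f hf h).not_gt hfQ

end Eps

section TopIndex

variable {ν : K[X] → Γ} {c : Γ} {f g : K[X]} {m n : ℕ}

/-- For `c = ε(f)` this says that `m` is the largest element of `I(f)`. -/
structure IsTopIndex (ν : K[X] → Γ) (c : Γ) (f : K[X]) (m : ℕ) : Prop where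
  le : ∀ j, hasseDeriv j f ≠ 0 → ν f - j * c ≤ ν (hasseDeriv j f)
  hasseDeriv_ne_zero : hasseDeriv m f ≠ 0
  eq : ν (hasseDeriv m f) = ν f - m * c
  lt : ∀ j, m < j → hasseDeriv j f ≠ 0 → ν f - j * c < ν (hasseDeriv j f)

theorem isTopIndex_zero_of_forall_lt (hf : f ≠ 0)
    (h : ∀ j, 0 < j → hasseDeriv j f ≠ 0 → ν f - j * c < ν (hasseDeriv j f)) :
    IsTopIndex ν c f 0 where
  le j hj := by
    rcases Nat.eq_zero_or_pos j with rfl | hj0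
    · simp
    · exact (h j hj0 hj).le
  hasseDeriv_ne_zero := by simpa using hf
  eq := by simp
  lt := h

theorem exists_isTopIndex_eps (hf : 1 ≤ f.natDegree) : ∃ m, 1 ≤ m ∧ IsTopIndex ν (eps ν f) f m := by
  set J := (Icc 1 f.natDegree).filter
    fun j => hasseDeriv j f ≠ 0 ∧ ν (hasseDeriv j f) = ν f - j * eps ν f
  have hJ : J.Nonempty := by
    obtain ⟨j, hj, hmax⟩ := exists_mem_eq_sup' (nonempty_filter_hasseDeriv_ne_zero hf)
      fun b => (ν f - ν (hasseDeriv b f)) / (b : Γ)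
    obtain ⟨hj, hj0⟩ := mem_filter.mp hj
    have hjpos : (0 : Γ) < j := by exact_mod_cast (mem_Icc.mp hj).1
    refine ⟨j, mem_filter.mpr ⟨hj, hj0, ?_⟩⟩
    rw [eps, dif_pos (nonempty_filter_hasseDeriv_ne_zero hf), hmax]
    field_simp
    ring
  obtain ⟨hm, hm0, hmeq⟩ := mem_filter.mp (J.max'_mem hJ)
  refine ⟨J.max' hJ, (mem_Icc.mp hm).1, fun _ => sub_mul_eps_le, hm0, hmeq, fun j hj hj0 => ?_⟩
  refine (sub_mul_eps_le hj0).lt_of_ne fun heq => (J.le_max' j ?_).not_gt hj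
  exact mem_filter.mpr ⟨mem_Icc.mpr ⟨by omega, le_natDegree_of_hasseDeriv_ne_zero hj0⟩,
    hj0, heq.symm⟩

theorem IsKeyPol.isTopIndex_zero {Q : K[X]} (hQ : IsKeyPol ν Q) (hg : g ≠ 0)
    (hgQ : g.natDegree < Q.natDegree) : IsTopIndex ν (eps ν Q) g 0 := by
  refine isTopIndex_zero_of_forall_lt hg fun j hj hj0 => ?_
  have hε := hQ.eps_lt (by have := le_natDegree_of_hasseDeriv_ne_zero hj0; omega) hgQ
  have := mul_lt_mul_of_pos_left hε (Nat.cast_pos (α := Γ).mpr hj)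
  linarith [sub_mul_eps_le (ν := ν) hj0]

theorem IsTopIndex.le_val_hasseDeriv_mul (hν : IsVal ν) (hf : IsTopIndex ν c f m)
    (hg : IsTopIndex ν c g n) {a e : ℕ} (h : hasseDeriv a f * hasseDeriv e g ≠ 0) :
    ν f + ν g - (a + e : ℕ) * c ≤ ν (hasseDeriv a f * hasseDeriv e g) := by
  obtain ⟨ha, he⟩ := mul_ne_zero_iff.mp h
  rw [hν.map_mul _ _ ha he]
  push_cast
  linarith [hf.le a ha, hg.le e he]

theorem IsTopIndex.lt_val_hasseDeriv_mul (hν : IsVal ν) (hf : IsTopIndex ν c f m)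
    (hg : IsTopIndex ν c g n) {a e : ℕ} (h : hasseDeriv a f * hasseDeriv e g ≠ 0)
    (hae : m < a ∨ n < e) :
    ν f + ν g - (a + e : ℕ) * c < ν (hasseDeriv a f * hasseDeriv e g) := by
  obtain ⟨ha, he⟩ := mul_ne_zero_iff.mp h
  rw [hν.map_mul _ _ ha he]
  push_cast
  rcases hae with hma | hne
  · linarith [hf.lt a hma ha, hg.le e he]
  · linarith [hf.le a ha, hg.lt e hne he]

/-- In `∂_{m+n}(fg) = Σ_{a+e=m+n} ∂_a f ∂_e g` every term but `∂_m f ∂_n g` is strictly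
dominated. -/
theorem IsTopIndex.mul (hν : IsVal ν) (hf : IsTopIndex ν c f m) (hg : IsTopIndex ν c g n) :
    IsTopIndex ν c (f * g) (m + n) := by
  have hfg : ν (f * g) = ν f + ν g := hν.map_mul _ _
    (fun h => hf.hasseDeriv_ne_zero (by rw [h, map_zero]))
    (fun h => hg.hasseDeriv_ne_zero (by rw [h, map_zero]))
  have hmn : hasseDeriv m f * hasseDeriv n g ≠ 0 :=
    mul_ne_zero hf.hasseDeriv_ne_zero hg.hasseDeriv_ne_zero
  have hval : ν (hasseDeriv m f * hasseDeriv n g) = ν f + ν g - (m + n : ℕ) * c := by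
    rw [hν.map_mul _ _ hf.hasseDeriv_ne_zero hg.hasseDeriv_ne_zero, hf.eq, hg.eq]
    push_cast
    ring
  obtain ⟨hne, heq⟩ := hν.map_sum_of_forall_lt (antidiagonal (m + n))
    (fun ae => hasseDeriv ae.1 f * hasseDeriv ae.2 g) (k := (m, n)) (mem_antidiagonal.mpr rfl) hmn
    fun ⟨a, e⟩ hae hne h0 => by
      have hsum : a + e = m + n := mem_antidiagonal.mp hae
      rw [Ne, Prod.mk.injEq] at hne
      rw [hval, ← hsum]
      exact hf.lt_val_hasseDeriv_mul hν hg h0 (by omega)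
  refine ⟨fun j hj => ?_, by rwa [hasseDeriv_mul], ?_, fun j hj hj0 => ?_⟩
  · rw [hasseDeriv_mul] at hj ⊢
    refine hν.le_map_sum _ (fun ⟨a, e⟩ hae h0 => ?_) hj
    rw [hfg, ← mem_antidiagonal.mp hae]
    exact hf.le_val_hasseDeriv_mul hν hg h0
  · rw [hasseDeriv_mul, heq, hval, hfg]
  · rw [hasseDeriv_mul] at hj0 ⊢
    refine hν.lt_map_sum _ (fun ⟨a, e⟩ hae h0 => ?_) hj0
    have hsum : a + e = j := mem_antidiagonal.mp hae
    rw [hfg, ← hsum]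
    exact hf.lt_val_hasseDeriv_mul hν hg h0 (by omega)

theorem IsTopIndex.pow (hν : IsVal ν) (hf : IsTopIndex ν c f m) (i : ℕ) :
    IsTopIndex ν c (f ^ i) (i * m) := by
  induction i with
  | zero =>
    rw [pow_zero, zero_mul]
    exact isTopIndex_zero_of_forall_lt one_ne_zero fun j hj h =>
      absurd (hasseDeriv_apply_one j hj) h
  | succ i ih =>
    rw [pow_succ, add_one_mul]
    exact ih.mul hν hf

end TopIndex

section Expansion

variable {ν : K[X] → Γ} {q f : K[X]} {i : ℕ}

theorem Polynomial.divByMonic_divByMonic {R : Type*} [CommRing R] {p q r : R[X]} (hq : q.Monic)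
    (hr : r.Monic) : p /ₘ q /ₘ r = p /ₘ (q * r) := by
  nontriviality R
  refine ((div_modByMonic_unique _ (p %ₘ q + q * (p /ₘ q %ₘ r)) (hq.mul hr) ⟨?_, ?_⟩).1).symm
  · linear_combination modByMonic_add_div p q + q * modByMonic_add_div (p /ₘ q) r
  refine (degree_add_le _ _).trans_lt (max_lt ?_ ?_)
  · refine (degree_modByMonic_lt p hq).trans_le ?_
    rw [hr.degree_mul]
    exact le_add_of_nonneg_right (zero_le_degree_iff.mpr hr.ne_zero)
  · rw [mul_comm q, mul_comm q, hq.degree_mul, hq.degree_mul]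
    exact WithBot.add_lt_add_right (degree_ne_bot.mpr hq.ne_zero) (degree_modByMonic_lt _ hr)

theorem sum_qCoeff_mul_pow_add (hq : q.Monic) (f : K[X]) (N : ℕ) :
    ∑ i ∈ range N, qCoeff q f i * q ^ i + q ^ N * (f /ₘ q ^ N) = f := by
  induction N with
  | zero => simp
  | succ N ih =>
    have hstep : f /ₘ q ^ N = qCoeff q f N + q * (f /ₘ q ^ (N + 1)) := by
      rw [pow_succ, ← divByMonic_divByMonic (hq.pow N) hq, qCoeff, modByMonic_add_div]
    rw [sum_range_succ]
    linear_combination ih - q ^ N * hstep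

theorem sum_qCoeff_mul_pow (hq : q.Monic) (hdq : 1 ≤ q.natDegree) (f : K[X]) :
    ∑ i ∈ range (f.natDegree + 1), qCoeff q f i * q ^ i = f := by
  have hdeg : f.degree < (q ^ (f.natDegree + 1)).degree := by
    rcases eq_or_ne f 0 with rfl | hf
    · rw [degree_zero, bot_lt_iff_ne_bot, degree_ne_bot]
      exact (hq.pow _).ne_zero
    refine degree_lt_degree ?_
    rw [hq.natDegree_pow]
    nlinarith
  simpa [(divByMonic_eq_zero_iff (hq.pow _)).mpr hdeg] using
    sum_qCoeff_mul_pow_add hq f (f.natDegree + 1)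

theorem mul_natDegree_le_of_qCoeff_ne_zero (hq : q.Monic) (h : qCoeff q f i ≠ 0) :
    i * q.natDegree ≤ f.natDegree := by
  have hdiv : f /ₘ q ^ i ≠ 0 := fun h0 => h (by rw [qCoeff, h0, zero_modByMonic])
  rw [Ne, divByMonic_eq_zero_iff (hq.pow i), not_lt] at hdiv
  simpa [hq.natDegree_pow] using natDegree_le_natDegree hdiv

theorem truncVal_le (hq : q.Monic) (hdq : 1 ≤ q.natDegree) (h : qCoeff q f i ≠ 0) :
    truncVal ν q f ≤ ν (qCoeff q f i * q ^ i) := by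
  have hi : i ∈ (range (f.natDegree + 1)).filter fun i => qCoeff q f i ≠ 0 := by
    refine mem_filter.mpr ⟨mem_range.mpr ?_, h⟩
    nlinarith [mul_natDegree_le_of_qCoeff_ne_zero hq h]
  rw [truncVal, dif_pos ⟨i, hi⟩]
  exact inf'_le (fun i => ν (qCoeff q f i * q ^ i)) hi

theorem exists_truncVal_eq (hq : q.Monic) (hdq : 1 ≤ q.natDegree) (hf : f ≠ 0) :
    ∃ i ∈ range (f.natDegree + 1), qCoeff q f i ≠ 0 ∧
      ν (qCoeff q f i * q ^ i) = truncVal ν q f := by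
  have hne : ((range (f.natDegree + 1)).filter fun i => qCoeff q f i ≠ 0).Nonempty := by
    rw [← sum_qCoeff_mul_pow hq hdq f] at hf
    obtain ⟨i, hi, h⟩ := exists_ne_zero_of_sum_ne_zero hf
    exact ⟨i, mem_filter.mpr ⟨hi, left_ne_zero_of_mul h⟩⟩
  obtain ⟨i, hi, heq⟩ := exists_mem_eq_inf' hne fun i => ν (qCoeff q f i * q ^ i)
  rw [mem_filter] at hi
  exact ⟨i, hi.1, hi.2, by rw [truncVal, dif_pos hne, heq]⟩

theorem truncVal_le_val (hν : IsVal ν) (hq : q.Monic) (hdq : 1 ≤ q.natDegree) (hf : f ≠ 0) :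
    truncVal ν q f ≤ ν f := by
  conv_rhs => rw [← sum_qCoeff_mul_pow hq hdq f]
  refine hν.le_map_sum _ (fun i _ h => truncVal_le hq hdq (left_ne_zero_of_mul h)) ?_
  rwa [sum_qCoeff_mul_pow hq hdq f]

theorem truncVal_eq_of_natDegree_lt (hq : q.Monic) (hdq : 1 ≤ q.natDegree) (hf : f ≠ 0)
    (hfq : f.natDegree < q.natDegree) : truncVal ν q f = ν f := by
  obtain ⟨i, -, hi, heq⟩ := exists_truncVal_eq (ν := ν) hq hdq hf
  obtain rfl : i = 0 := by nlinarith [mul_natDegree_le_of_qCoeff_ne_zero hq hi]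
  rw [← heq, qCoeff, pow_zero, mul_one, divByMonic_one,
    (modByMonic_eq_self_iff hq).mpr (degree_lt_degree hfq)]

end Expansion

section KeyPolynomial

variable {ν : K[X] → Γ} {Q f : K[X]} {c : Γ}

theorem IsKeyPol.isTopIndex_qCoeff_mul_pow (hν : IsVal ν) (hQ : IsKeyPol ν Q) {b i : ℕ}
    (hb : IsTopIndex ν (eps ν Q) Q b) (hi : qCoeff Q f i ≠ 0) :
    IsTopIndex ν (eps ν Q) (qCoeff Q f i * Q ^ i) (i * b) := by
  have hdeg := natDegree_lt_natDegree hi (degree_modByMonic_lt _ hQ.1)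
  simpa using (hQ.isTopIndex_zero hi hdeg).mul hν (hb.pow hν i)

theorem sub_mul_le_val_hasseDeriv_of_sum (hν : IsVal ν) {ι : Type*} (s : Finset ι)
    {t : ι → K[X]} (hf : ∑ i ∈ s, t i = f) {v : Γ} (hv : ∀ i ∈ s, t i ≠ 0 → v ≤ ν (t i))
    (ht : ∀ i ∈ s, t i ≠ 0 → ∀ j, hasseDeriv j (t i) ≠ 0 → ν (t i) - j * c ≤ ν (hasseDeriv j (t i)))
    {j : ℕ} (hj : hasseDeriv j f ≠ 0) : v - j * c ≤ ν (hasseDeriv j f) := by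
  subst hf
  rw [map_sum] at hj ⊢
  refine hν.le_map_sum s (fun i hi h => ?_) hj
  have hti : t i ≠ 0 := fun h0 => h (by rw [h0, map_zero])
  linarith [hv i hi hti, ht i hi hti j h]

theorem val_hasseDeriv_of_sum_of_isTopIndex (hν : IsVal ν) {ι : Type*} (s : Finset ι)
    {t : ι → K[X]} (hf : ∑ i ∈ s, t i = f) {m : ι → ℕ}
    (ht : ∀ i ∈ s, t i ≠ 0 → IsTopIndex ν c (t i) (m i)) {k : ι} (hk : k ∈ s) (htk : t k ≠ 0)
    (hmin : ∀ i ∈ s, t i ≠ 0 → ν (t k) ≤ ν (t i))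
    (hmax : ∀ i ∈ s, i ≠ k → t i ≠ 0 → ν (t i) = ν (t k) → m i < m k) :
    hasseDeriv (m k) f ≠ 0 ∧ ν (hasseDeriv (m k) f) = ν (t k) - m k * c := by
  subst hf
  have htk' := ht k hk htk
  rw [map_sum, ← htk'.eq]
  refine hν.map_sum_of_forall_lt s _ hk htk'.hasseDeriv_ne_zero fun i hi hik h => ?_
  have hti : t i ≠ 0 := fun h0 => h (by rw [h0, map_zero])
  rw [htk'.eq]
  rcases (hmin i hi hti).lt_or_eq with hlt | heq
  · linarith [(ht i hi hti).le (m k) h]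
  · linarith [(ht i hi hti).lt (m k) (hmax i hi hik hti heq.symm) h]

theorem IsKeyPol.eps_le_of_truncVal_eq (hν : IsVal ν) (hQ : IsKeyPol ν Q) (hf : 1 ≤ f.natDegree)
    (heq : truncVal ν Q f = ν f) : eps ν f ≤ eps ν Q := by
  obtain ⟨b, -, hb⟩ := exists_isTopIndex_eps (ν := ν) hQ.2.1
  refine eps_le_of_forall hf fun j hj => ?_
  refine sub_mul_le_val_hasseDeriv_of_sum hν _ (sum_qCoeff_mul_pow hQ.1 hQ.2.1 f)
    (fun i _ hi => heq ▸ truncVal_le hQ.1 hQ.2.1 (left_ne_zero_of_mul hi))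
    (fun i _ hi => (hQ.isTopIndex_qCoeff_mul_pow hν hb (left_ne_zero_of_mul hi)).le) hj

theorem IsKeyPol.eps_lt_of_truncVal_lt (hν : IsVal ν) (hQ : IsKeyPol ν Q) (hf : f ≠ 0)
    (hlt : truncVal ν Q f < ν f) : eps ν Q < eps ν f := by
  obtain ⟨b, hb1, hb⟩ := exists_isTopIndex_eps (ν := ν) hQ.2.1
  set S := (range (f.natDegree + 1)).filter
    fun i => qCoeff Q f i ≠ 0 ∧ ν (qCoeff Q f i * Q ^ i) = truncVal ν Q f
  have hS : S.Nonempty := by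
    obtain ⟨i, hi, h⟩ := exists_truncVal_eq (ν := ν) hQ.1 hQ.2.1 hf
    exact ⟨i, mem_filter.mpr ⟨hi, h⟩⟩
  obtain ⟨hδ, hδ0, hδv⟩ := mem_filter.mp (S.max'_mem hS)
  obtain ⟨hne, hval⟩ := val_hasseDeriv_of_sum_of_isTopIndex hν _
    (sum_qCoeff_mul_pow hQ.1 hQ.2.1 f) (m := (· * b))
    (fun i _ hi => hQ.isTopIndex_qCoeff_mul_pow hν hb (left_ne_zero_of_mul hi)) hδ
    (mul_ne_zero hδ0 (pow_ne_zero _ hQ.1.ne_zero))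
    (fun i _ hi => hδv ▸ truncVal_le hQ.1 hQ.2.1 (left_ne_zero_of_mul hi))
    fun i hi hiδ hti heq => Nat.mul_lt_mul_of_pos_right
      ((S.le_max' i (mem_filter.mpr ⟨hi, left_ne_zero_of_mul hti, heq.trans hδv⟩)).lt_of_ne hiδ)
      hb1
  exact lt_eps_of_lt hne (by rw [hval, hδv]; linarith)

end KeyPolynomial

/-- Every element of `Ψ(Q)` is a key polynomial, of level `> ε(Q)`. -/
theorem Psi_isKeyPol (ν : Polynomial K → Γ) (hν : IsVal ν)
    (Q : Polynomial K) (hQ : IsKeyPol ν Q) (Q' : Polynomial K)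
    (hQ' : Q' ∈ Psi ν Q) :
    IsKeyPol ν Q' ∧ eps ν Q < eps ν Q' := by
  obtain ⟨hmon, hlt, hmin⟩ := hQ'
  have hdeg : 1 ≤ Q'.natDegree := by
    by_contra! h
    exact hlt.ne (truncVal_eq_of_natDegree_lt hQ.1 hQ.2.1 hmon.ne_zero (h.trans_le hQ.2.1))
  have hε := hQ.eps_lt_of_truncVal_lt hν hmon.ne_zero hlt
  refine ⟨⟨hmon, hdeg, fun f hf hεf => ?_⟩, hε⟩
  have hf0 : f ≠ 0 := ne_zero_of_natDegree_gt hf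
  refine hmin f hf0 ((truncVal_le_val hν hQ.1 hQ.2.1 hf0).lt_of_ne fun heq => ?_)
  exact (hQ.eps_le_of_truncVal_eq hν hf heq).not_gt (hε.trans_le hεf)
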